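/- arXiv:2605.23849 — 3 statements merged into one kernel-verified Lean document; each statement's English description precedes it below -/
import Mathlib

section
/- Fix integers 0 ≤ t < k ≤ n. Every ℤ-valued k-uniform null t-design on the subsets of {1,…,n} is a ℤ-linear combination of pods, i.e., the ℤ-module of ℤ-valued k-uniform null t-designs is generated by the pod designs. -/
attribute [local instance] Classical.propDecidable

/-- The `(t,k)`-pod determined by pairwise distinct elements
`a_1,b_1,…,a_{t+1},b_{t+1},c_1,…,c_{k−t−1}`: it takes value `(−1)^{#{i : b_i ∈ F}}`
on each `k`-subset `F` consisting of exactly one element of each pair `{a_i, b_i}`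
together with all the `c_j`, and value `0` elsewhere. Its values are the
coefficients of `(x_{a_1}−x_{b_1})⋯(x_{a_{t+1}}−x_{b_{t+1}})·x_{c_1}⋯x_{c_{k−t−1}}`. -/
noncomputable def pod (n k t : ℕ) (a b : Fin (t + 1) → Fin n)
    (c : Fin (k - t - 1) → Fin n) : Finset (Fin n) → ℤ :=
  fun F =>
    if (∀ j, c j ∈ F) ∧ (∀ i, (a i ∈ F ↔ b i ∉ F)) ∧
        F ⊆ Finset.image a Finset.univ ∪ Finset.image b Finset.univ ∪
              Finset.image c Finset.univ
    then (-1) ^ (Finset.univ.filter (fun i => b i ∈ F)).card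
    else 0


/-!
Order finite sets colexicographically and let `F₀` be the colex-largest set on which `f` is
nonzero, with elements `c_1 < ⋯ < c_{k-t-1} < b_1 < ⋯ < b_{t+1}`. If fewer than `i`
non-elements of `F₀` lay below `b_i`, these and the `t + 1 - i` elements of `F₀` above `b_i`
would number at most `t`, so by inclusion–exclusion the design equations make `f` sum to `0`
over the sets containing the latter and avoiding the former. By maximality and uniformity `F₀`
is the only set of the support in that range, a contradiction. Hence there are distinct
`a_i ∉ F₀` with `a_i < b_i`. The pod on `(a, b, c)` is `±1` at `F₀` and every other set in its
support is colex-smaller, so subtracting a multiple of it from `f` lowers the colex-maximum of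
the support.
-/

open Finset
open scoped symmDiff

section Designs

variable {α M : Type*} [AddCommGroup M] {t k : ℕ} {f g : Finset α → M}

def IsUniform (k : ℕ) (f : Finset α → M) : Prop :=
  ∀ F, f F ≠ 0 → F.card = k

lemma IsUniform.sub (hf : IsUniform k f) (hg : IsUniform k g) : IsUniform k (f - g) :=
  fun F hF => by
    by_cases hfF : f F = 0
    · exact hg F fun hgF => hF (by simp [hfF, hgF])
    · exact hf F hfF

lemma IsUniform.zsmul (hf : IsUniform k f) (m : ℤ) : IsUniform k (m • f) :=
  fun F hF => hf F fun hfF => hF (by simp [hfF])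

variable [Fintype α] [DecidableEq α]

def IsNullDesign (t : ℕ) (f : Finset α → M) : Prop :=
  ∀ X : Finset α, X.card ≤ t → ∑ F ∈ univ.filter (fun F => X ⊆ F), f F = 0

lemma IsNullDesign.sub (hf : IsNullDesign t f) (hg : IsNullDesign t g) :
    IsNullDesign t (f - g) := fun X hX => by
  simp only [Pi.sub_apply, sum_sub_distrib, hf X hX, hg X hX, sub_zero]

lemma IsNullDesign.zsmul (hf : IsNullDesign t f) (m : ℤ) : IsNullDesign t (m • f) :=
  fun X hX => by simp only [Pi.smul_apply, ← smul_sum, hf X hX, smul_zero]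

lemma IsNullDesign.sum_superset_disjoint (hf : IsNullDesign t f) {X Y : Finset α}
    (hXY : X.card + Y.card ≤ t) :
    ∑ F ∈ univ.filter (fun F => X ⊆ F ∧ Disjoint F Y), f F = 0 := by
  induction Y using Finset.induction_on generalizing X with
  | empty => simpa using hf X (by simpa using hXY)
  | @insert y Y hy ih =>
    rw [card_insert_of_notMem hy] at hXY
    have hsplit := sum_filter_add_sum_filter_not
      (univ.filter (fun F => X ⊆ F ∧ Disjoint F Y)) (fun F => y ∈ F) f
    rw [ih (by omega), filter_filter, filter_filter] at hsplit
    rwa [filter_congr (q := fun F => insert y X ⊆ F ∧ Disjoint F Y)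
        (by simp [insert_subset_iff]; tauto), ih (by grind [card_insert_le]), zero_add,
      filter_congr (q := fun F => X ⊆ F ∧ Disjoint F (insert y Y)) (by simp; tauto)] at hsplit

variable [LinearOrder α]

lemma IsNullDesign.lt_card_filter_gt_add_card_filter_lt (hf : IsNullDesign t f) (hu : IsUniform k f)
    {F₀ : Finset α} (hF₀ : f F₀ ≠ 0) (hmax : ∀ F, f F ≠ 0 → toColex F ≤ toColex F₀)
    {x : α} (hx : x ∈ F₀) :
    t < #{z ∈ F₀ | x < z} + #{z ∈ F₀ᶜ | z < x} := by
  by_contra! h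
  set X := F₀.filter (x < ·)
  set Y := F₀ᶜ.filter (· < x)
  have hsum := hf.sum_superset_disjoint h
  refine hF₀ (hsum ▸ (sum_eq_single_of_mem F₀ ?_ fun F hF hne => ?_).symm)
  · simpa [X, Y] using disjoint_compl_right.mono_right (filter_subset _ _)
  · by_contra hfF
    simp only [mem_filter, mem_univ, true_and] at hF
    obtain ⟨hXF, hFY⟩ := hF
    have hsub : F ⊆ F₀ := by
      intro z hz
      by_contra hz₀
      rcases lt_trichotomy z x with hzx | rfl | hxz
      · exact disjoint_left.1 hFY hz (by simpa [Y] using ⟨hz₀, hzx⟩)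
      · exact hz₀ hx
      · refine not_lt_of_ge (hmax F hfF) (Colex.toColex_lt_toColex_iff_exists_forall_lt.2
          ⟨z, hz, hz₀, fun u hu huF => ?_⟩)
        have : u ∉ X := fun huX => huF (hXF huX)
        simp only [X, mem_filter, not_and, not_lt] at this
        exact (this hu).trans_lt hxz
    exact hne (eq_of_subset_of_card_le hsub (by rw [hu F hfF, hu F₀ hF₀]))

end Designs

section Sorting

variable {α : Type*} [LinearOrder α] {m : ℕ}

lemma Finset.card_filter_orderEmbOfFin (s : Finset α) (h : s.card = m) (p : α → Prop)
    [DecidablePred p] : #{z ∈ s | p z} = #{i | p (s.orderEmbOfFin h i)} := by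
  conv_lhs => rw [← map_orderEmbOfFin_univ s h]
  rw [filter_map, card_map]
  rfl

lemma Finset.card_filter_lt_orderEmbOfFin (s : Finset α) (h : s.card = m) (j : Fin m) :
    #{z ∈ s | z < s.orderEmbOfFin h j} = j := by
  simp [card_filter_orderEmbOfFin s h, filter_gt_eq_Iio]

lemma Finset.card_filter_gt_orderEmbOfFin (s : Finset α) (h : s.card = m) (j : Fin m) :
    #{z ∈ s | s.orderEmbOfFin h j < z} = m - 1 - j := by
  simp [card_filter_orderEmbOfFin s h, filter_lt_eq_Ioi]

lemma exists_injective_lt_of_lt_card (D : Finset α) (b : Fin m → α)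
    (hb : ∀ i : Fin m, (i : ℕ) < #{z ∈ D | z < b i}) :
    ∃ a : Fin m → α, Function.Injective a ∧ (∀ i, a i ∈ D) ∧ ∀ i, a i < b i := by
  set e := D.orderEmbOfFin rfl
  have hm : ∀ i : Fin m, (i : ℕ) < #D := fun i => (hb i).trans_le (card_filter_le _ _)
  refine ⟨fun i => e ⟨i, hm i⟩, fun i j hij => by simpa [Fin.ext_iff] using e.injective hij,
    fun i => orderEmbOfFin_mem _ _ _, fun i => ?_⟩
  by_contra! hba
  have : #{z ∈ D | z < b i} ≤ #{z ∈ D | z < e ⟨i, hm i⟩} :=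
    card_le_card fun z => by simpa using fun hz hzb => ⟨hz, hzb.trans_le hba⟩
  rw [card_filter_lt_orderEmbOfFin] at this
  exact (hb i).not_ge this

end Sorting

section Transversal

variable {ι κ α : Type*} {a b : ι → α} {c : κ → α} {F : Finset α}

lemma neg_one_pow_card_filter_eq_neg [Fintype ι] {p q : ι → Prop} [DecidablePred p]
    [DecidablePred q] (i₀ : ι) (hi₀ : p i₀ ↔ ¬ q i₀) (hpq : ∀ i, i ≠ i₀ → (p i ↔ q i)) :
    (-1 : ℤ) ^ #{i | p i} = -(-1) ^ #{i | q i} := by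
  by_cases hq : q i₀
  · have : univ.filter q = insert i₀ (univ.filter p) := by
      ext i; by_cases hi : i = i₀ <;> simp_all
    rw [this, card_insert_of_notMem (by simpa [hi₀] using hq), pow_succ]
    ring
  · have : univ.filter p = insert i₀ (univ.filter q) := by
      ext i; by_cases hi : i = i₀ <;> simp_all
    rw [this, card_insert_of_notMem (by simpa using hq), pow_succ]
    ring

lemma injective_sumElim_sumElim_iff :
    Function.Injective (Sum.elim a (Sum.elim b c)) ↔
      Function.Injective a ∧ Function.Injective b ∧ Function.Injective c ∧
        (∀ i j, a i ≠ b j) ∧ (∀ i j, a i ≠ c j) ∧ ∀ i j, b i ≠ c j := by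
  simp only [Sum.elim_injective, Sum.forall, Sum.elim_inl, Sum.elim_inr, forall_and]
  tauto

lemma injective_ite (ha : Function.Injective a) (hb : Function.Injective b)
    (hab : ∀ i j, a i ≠ b j) (p : ι → Prop) [DecidablePred p] :
    Function.Injective fun i => if p i then a i else b i := fun i j hij => by
  grind [Function.Injective]

variable [Fintype ι] [Fintype κ] [DecidableEq α]

def IsTransversal (a b : ι → α) (c : κ → α) (F : Finset α) : Prop :=
  (∀ j, c j ∈ F) ∧ (∀ i, (a i ∈ F ↔ b i ∉ F)) ∧
    F ⊆ image a univ ∪ image b univ ∪ image c univ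

lemma IsTransversal.card (hinj : Function.Injective (Sum.elim a (Sum.elim b c)))
    (h : IsTransversal a b c F) : #F = Fintype.card ι + Fintype.card κ := by
  obtain ⟨ha, hb, hc, hab, hac, hbc⟩ := injective_sumElim_sumElim_iff.1 hinj
  set x := fun i => if b i ∈ F then b i else a i
  have hx : Function.Injective (Sum.elim x c) := by
    refine Sum.elim_injective.2 ⟨injective_ite hb ha (fun i j => (hab j i).symm) _, hc,
      fun i j => ?_⟩
    by_cases hi : b i ∈ F <;> simp [x, hi, hbc, hac]
  have hF : F = univ.image (Sum.elim x c) := by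
    obtain ⟨hcF, habF, hFabc⟩ := h
    ext z
    have := @hFabc z
    simp only [mem_union, mem_image, mem_univ, true_and, Sum.exists, Sum.elim_inl,
      Sum.elim_inr] at this ⊢
    grind
  rw [hF, card_image_of_injective _ hx, card_univ, Fintype.card_sum]

lemma IsTransversal.symmDiff_pair (hinj : Function.Injective (Sum.elim a (Sum.elim b c)))
    (i₀ : ι) (h : IsTransversal a b c F) : IsTransversal a b c (F ∆ {a i₀, b i₀}) := by
  obtain ⟨ha, hb, -, hab, hac, hbc⟩ := injective_sumElim_sumElim_iff.1 hinj
  obtain ⟨hcF, habF, hF⟩ := h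
  refine ⟨fun j => ?_, fun i => ?_, ?_⟩
  · simp [mem_symmDiff, hcF j, (hac i₀ j).symm, (hbc i₀ j).symm]
  · by_cases hi : i = i₀
    · subst hi
      simp [mem_symmDiff, hab i i, (hab i i).symm, habF i]
    · simp [mem_symmDiff, ha.ne hi, hb.ne hi, hab i i₀, (hab i₀ i).symm, habF i]
  · exact symmDiff_le_sup.trans (union_subset hF (by simp [insert_subset_iff]))

lemma IsTransversal.toColex_le [LinearOrder α] (hab : ∀ i, a i < b i)
    (h : IsTransversal a b c F) : toColex F ≤ toColex (image b univ ∪ image c univ) := by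
  rw [Colex.toColex_le_toColex]
  intro z hz hzbc
  have hzabc := h.2.2 hz
  simp only [mem_union] at hzabc hzbc
  obtain ⟨i, -, rfl⟩ := mem_image.1 (by tauto : z ∈ image a univ)
  exact ⟨b i, by simp, (h.2.1 i).1 hz, (hab i).le⟩

end Transversal

section Pod

variable {n k t : ℕ} {a b : Fin (t + 1) → Fin n} {c : Fin (k - t - 1) → Fin n}
  {F : Finset (Fin n)}

lemma pod_of_isTransversal (h : IsTransversal a b c F) :
    pod n k t a b c F = (-1) ^ #{i | b i ∈ F} := by
  unfold pod
  exact if_pos h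

lemma pod_of_not_isTransversal (h : ¬ IsTransversal a b c F) : pod n k t a b c F = 0 := by
  unfold pod
  exact if_neg h

lemma isTransversal_of_pod_ne_zero (h : pod n k t a b c F ≠ 0) : IsTransversal a b c F :=
  not_not.1 fun h' => h (pod_of_not_isTransversal h')

lemma pod_symmDiff_pair (hinj : Function.Injective (Sum.elim a (Sum.elim b c)))
    (i₀ : Fin (t + 1)) (F : Finset (Fin n)) :
    pod n k t a b c (F ∆ {a i₀, b i₀}) = -pod n k t a b c F := by
  by_cases h : IsTransversal a b c F
  · rw [pod_of_isTransversal h, pod_of_isTransversal (h.symmDiff_pair hinj i₀)]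
    obtain ⟨-, hb, -, hab, -⟩ := injective_sumElim_sumElim_iff.1 hinj
    refine neg_one_pow_card_filter_eq_neg i₀ (by simp [mem_symmDiff, (hab i₀ i₀).symm]) ?_
    intro i hi
    simp [mem_symmDiff, hb.ne hi, (hab i₀ i).symm]
  · have h' : ¬ IsTransversal a b c (F ∆ {a i₀, b i₀}) := fun h' =>
      h (by simpa only [symmDiff_symmDiff_cancel_right] using h'.symmDiff_pair hinj i₀)
    rw [pod_of_not_isTransversal h, pod_of_not_isTransversal h', neg_zero]

lemma isNullDesign_pod (hinj : Function.Injective (Sum.elim a (Sum.elim b c))) :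
    IsNullDesign t (pod n k t a b c) := by
  intro X hX
  obtain ⟨i₀, haX, hbX⟩ : ∃ i, a i ∉ X ∧ b i ∉ X := by
    by_contra! hX'
    obtain ⟨ha, hb, -, hab, -⟩ := injective_sumElim_sumElim_iff.1 hinj
    have := card_le_card_of_injOn (s := univ) (t := X) _
      (fun i _ => show (if a i ∈ X then a i else b i) ∈ X by split_ifs with h <;> grind)
      (injective_ite ha hb hab _).injOn
    rw [card_univ, Fintype.card_fin] at this
    omega
  refine sum_involution (fun F _ => F ∆ {a i₀, b i₀})
    (fun F _ => by rw [pod_symmDiff_pair hinj, add_neg_cancel])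
    (fun F _ _ => by simp [symmDiff_eq_left]) (fun F hF => ?_)
    (fun F _ => symmDiff_symmDiff_cancel_right _ _)
  simp only [mem_filter, mem_univ, true_and] at hF ⊢
  intro x hx
  simp only [mem_symmDiff, hF hx, mem_insert, mem_singleton]
  grind

lemma isUniform_pod (htk : t < k) (hinj : Function.Injective (Sum.elim a (Sum.elim b c))) :
    IsUniform k (pod n k t a b c) := fun F hF => by
  rw [(isTransversal_of_pod_ne_zero hF).card hinj, Fintype.card_fin, Fintype.card_fin]
  omega

lemma pod_image_union (hinj : Function.Injective (Sum.elim a (Sum.elim b c))) :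
    pod n k t a b c (image b univ ∪ image c univ) = (-1) ^ (t + 1) := by
  obtain ⟨-, -, -, hab, hac, -⟩ := injective_sumElim_sumElim_iff.1 hinj
  have h : IsTransversal a b c (image b univ ∪ image c univ) :=
    ⟨by simp, by simpa [eq_comm] using fun i => And.intro (hab i) (hac i),
      union_subset_union_left subset_union_right⟩
  rw [pod_of_isTransversal h, filter_true_of_mem (by simp), card_univ, Fintype.card_fin]

end Pod

section Spanning

instance {α : Type*} [Finite α] : Finite (Colex (Finset α)) :=
  inferInstanceAs (Finite (Finset α))

variable {n k t : ℕ}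

def pods (n k t : ℕ) : Set (Finset (Fin n) → ℤ) :=
  {g | ∃ (a b : Fin (t + 1) → Fin n) (c : Fin (k - t - 1) → Fin n),
    Function.Injective (Sum.elim a (Sum.elim b c)) ∧ g = pod n k t a b c}

lemma eq_zero_or_exists_colex_max {α M : Type*} [Fintype α] [LinearOrder α] [Zero M]
    (f : Finset α → M) :
    f = 0 ∨ ∃ F₀, f F₀ ≠ 0 ∧ ∀ F, f F ≠ 0 → toColex F ≤ toColex F₀ := by
  by_cases h : (univ.filter (f · ≠ 0)).Nonempty
  · obtain ⟨F₀, hF₀, hmax⟩ := exists_max_image _ toColex h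
    exact Or.inr ⟨F₀, (mem_filter.1 hF₀).2, fun F hF => hmax F (by simpa using hF)⟩
  · refine Or.inl (funext fun F => ?_)
    by_contra hF
    exact h ⟨F, by simpa using hF⟩

lemma exists_pod_of_colex_max {M : Type*} [AddCommGroup M] {f : Finset (Fin n) → M}
    (htk : t < k) (hf : IsNullDesign t f) (hu : IsUniform k f) {F₀ : Finset (Fin n)}
    (hF₀ : f F₀ ≠ 0) (hmax : ∀ F, f F ≠ 0 → toColex F ≤ toColex F₀) :
    ∃ (a b : Fin (t + 1) → Fin n) (c : Fin (k - t - 1) → Fin n),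
      Function.Injective (Sum.elim a (Sum.elim b c)) ∧ pod n k t a b c F₀ = (-1) ^ (t + 1) ∧
      ∀ F, pod n k t a b c F ≠ 0 → toColex F ≤ toColex F₀ := by
  set s := k - t - 1
  have hcard : #F₀ = s + (t + 1) := by rw [hu F₀ hF₀]; omega
  set e := F₀.orderEmbOfFin hcard
  set b : Fin (t + 1) → Fin n := fun i => e (Fin.natAdd s i)
  set c : Fin s → Fin n := fun j => e (Fin.castAdd (t + 1) j)
  have hbc : Sum.elim b c = e ∘ Sum.elim (Fin.natAdd s) (Fin.castAdd (t + 1)) := by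
    ext (i | j) <;> rfl
  have hbcF₀ : image b univ ∪ image c univ = F₀ := by
    ext z
    refine ⟨fun hz => ?_, fun hz => ?_⟩
    · simp only [mem_union, mem_image, mem_univ, true_and] at hz
      obtain ⟨i, rfl⟩ | ⟨j, rfl⟩ := hz <;> exact orderEmbOfFin_mem ..
    · obtain ⟨l, rfl⟩ : z ∈ Set.range e := by rwa [range_orderEmbOfFin]
      induction l using Fin.addCases <;> simp [b, c]
  obtain ⟨a, ha, haF₀, hab⟩ := exists_injective_lt_of_lt_card F₀ᶜ b fun i => by
    have := hf.lt_card_filter_gt_add_card_filter_lt hu hF₀ hmax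
      (orderEmbOfFin_mem F₀ hcard (Fin.natAdd s i))
    rw [card_filter_gt_orderEmbOfFin, Fin.val_natAdd] at this
    dsimp only [b, e]
    omega
  have hinj : Function.Injective (Sum.elim a (Sum.elim b c)) := by
    refine ha.sumElim ?_ fun i x hx => mem_compl.1 (haF₀ i) ?_
    · rw [hbc]
      refine e.injective.comp (Sum.elim_injective.2 ⟨Fin.natAdd_injective _ _,
        Fin.castAdd_injective _ _, fun i j h => ?_⟩)
      have := congrArg Fin.val h
      simp at this
      omega
    · rw [hx, hbc]
      exact orderEmbOfFin_mem ..
  refine ⟨a, b, c, hinj, hbcF₀ ▸ pod_image_union hinj, fun F hF => ?_⟩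
  exact hbcF₀ ▸ (isTransversal_of_pod_ne_zero hF).toColex_le hab

lemma exists_sub_smul_pod_lt (htk : t < k) {f : Finset (Fin n) → ℤ} (hf : IsNullDesign t f)
    (hu : IsUniform k f) {F₀ : Finset (Fin n)} (hF₀ : f F₀ ≠ 0)
    (hmax : ∀ F, f F ≠ 0 → toColex F ≤ toColex F₀) :
    ∃ g ∈ pods n k t, ∃ m : ℤ, ∀ F, (f - m • g) F ≠ 0 → toColex F < toColex F₀ := by
  obtain ⟨a, b, c, hinj, hpodF₀, hle⟩ := exists_pod_of_colex_max htk hf hu hF₀ hmax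
  refine ⟨_, ⟨a, b, c, hinj, rfl⟩, (-1) ^ (t + 1) * f F₀, fun F hF => lt_of_le_of_ne ?_ ?_⟩
  · by_cases hfF : f F = 0
    · exact hle F fun h => hF (by simp [hfF, h])
    · exact hmax F hfF
  · intro h
    obtain rfl := toColex.injective h
    have hsq : ((-1 : ℤ) ^ (t + 1)) * (-1) ^ (t + 1) = 1 := by rw [← mul_pow]; norm_num
    refine hF ?_
    simp only [Pi.sub_apply, Pi.smul_apply, smul_eq_mul, hpodF₀]
    linear_combination (-f F) * hsq

theorem mem_span_pods (htk : t < k) (f : Finset (Fin n) → ℤ) (hf : IsNullDesign t f)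
    (hu : IsUniform k f) : f ∈ Submodule.span ℤ (pods n k t) := by
  suffices h : ∀ U : WithTop (Colex (Finset (Fin n))), ∀ f : Finset (Fin n) → ℤ,
      IsNullDesign t f → IsUniform k f → (∀ F, f F ≠ 0 → WithTop.some (toColex F) < U) →
      f ∈ Submodule.span ℤ (pods n k t) from
    h ⊤ f hf hu fun F _ => WithTop.coe_lt_top _
  intro U
  induction U using WellFoundedLT.induction with
  | _ U ih =>
  intro f hf hu hlt
  obtain rfl | ⟨F₀, hF₀, hmax⟩ := eq_zero_or_exists_colex_max f
  · exact zero_mem _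
  obtain ⟨g, ⟨a, b, c, hinj, rfl⟩, m, hlt'⟩ := exists_sub_smul_pod_lt htk hf hu hF₀ hmax
  have hsub := ih _ (hlt F₀ hF₀) _ (hf.sub ((isNullDesign_pod hinj).zsmul m))
    (hu.sub ((isUniform_pod htk hinj).zsmul m)) fun F hF => WithTop.coe_lt_coe.2 (hlt' F hF)
  simpa using add_mem hsub (Submodule.smul_mem _ m (Submodule.subset_span ⟨a, b, c, hinj, rfl⟩))

end Spanning

theorem stmt_8_general (n k t : ℕ) (htk : t < k)
    (f : Finset (Fin n) → ℤ)
    (hdes : ∀ X : Finset (Fin n), X.card ≤ t →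
      ∑ F ∈ Finset.univ.filter (fun F : Finset (Fin n) => X ⊆ F), f F = 0)
    (hunif : ∀ F : Finset (Fin n), f F ≠ 0 → F.card = k) :
    f ∈ Submodule.span ℤ
      {g : Finset (Fin n) → ℤ |
        ∃ (a b : Fin (t + 1) → Fin n) (c : Fin (k - t - 1) → Fin n),
          Function.Injective (Sum.elim a (Sum.elim b c)) ∧ g = pod n k t a b c} :=
  mem_span_pods htk f hdes hunif

/-- Every `ℤ`-valued `k`-uniform null `t`-design on subsets of `{1,…,n}` is a
`ℤ`-linear combination of pods: the `ℤ`-module of `k`-uniform null `t`-designs is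
generated by the pod designs. -/
theorem stmt_8 (n k t : ℕ) (htk : t < k) (hkn : k ≤ n)
    (f : Finset (Fin n) → ℤ)
    (hdes : ∀ X : Finset (Fin n), X.card ≤ t →
      ∑ F ∈ Finset.univ.filter (fun F : Finset (Fin n) => X ⊆ F), f F = 0)
    (hunif : ∀ F : Finset (Fin n), f F ≠ 0 → F.card = k) :
    f ∈ Submodule.span ℤ
      {g : Finset (Fin n) → ℤ |
        ∃ (a b : Fin (t + 1) → Fin n) (c : Fin (k - t - 1) → Fin n),
          Function.Injective (Sum.elim a (Sum.elim b c)) ∧ g = pod n k t a b c} :=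
  stmt_8_general n k t htk f hdes hunif
end

section
/- Let p be a prime and let 0 ≤ t < k ≤ n be integers. Let M be the matrix over the field 𝔽_p with rows indexed by t-element subsets T of {1,…,n} and columns indexed by k-element subsets K of {1,…,n}, whose (T,K) entry is (k−t)! (reduced mod p) if T ⊆ K and 0 otherwise (this is the matrix of the multiplication map ×(x_1+…+x_n)^{k−t} from the degree-t to the degree-k graded piece of 𝔽_p[x_1,…,x_n]/(x_1^2,…,x_n^2) in the squarefree monomial bases). Then M has full rank min(binom(n,t), binom(n,k)) if and only if p > min(k, n−t). -/
set_option linter.unusedSectionVars false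
set_option linter.unusedVariables false

open Finset Matrix

/-- The matrix over `𝔽_p` of the multiplication map
`×(x_1+…+x_n)^{k−t} : A_t → A_k` in `A = 𝔽_p[x]/(x_i^2)` on squarefree monomial
bases: entry `(k−t)!` (mod `p`) if `T ⊆ K` and `0` otherwise. -/
def lefMat (p n k t : ℕ) :
    Matrix {T : Finset (Fin n) // T.card = t} {K : Finset (Fin n) // K.card = k}
      (ZMod p) :=
  fun T K => if T.1 ⊆ K.1 then ((k - t).factorial : ZMod p) else 0

section Aux

variable {α : Type*} [DecidableEq α]

/-- Number of `m`-subsets between `A` and `B`. -/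
lemma card_middle (A B : Finset α) (m : ℕ) (hAB : A ⊆ B) (hm : A.card ≤ m) :
    ((B.powersetCard m).filter (fun X => A ⊆ X)).card
      = (B.card - A.card).choose (m - A.card) := by
  rw [← Finset.card_sdiff_of_subset hAB, ← Finset.card_powersetCard (m - A.card) (B \ A)]
  apply Finset.card_bij' (fun X _ => X \ A) (fun Y _ => Y ∪ A)
  · intro X hX
    simp only [mem_filter, mem_powersetCard] at hX
    obtain ⟨⟨hXB, hXc⟩, hAX⟩ := hX
    simp only [mem_powersetCard]
    exact ⟨sdiff_subset_sdiff hXB le_rfl, by rw [card_sdiff_of_subset hAX, hXc]⟩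
  · intro Y hY
    simp only [mem_powersetCard] at hY
    obtain ⟨hYBA, hYc⟩ := hY
    have hYB : Y ⊆ B := hYBA.trans sdiff_subset
    have hYA : Disjoint Y A := Finset.disjoint_left.mpr
      (fun a ha hA => (Finset.mem_sdiff.mp (hYBA ha)).2 hA)
    simp only [mem_filter, mem_powersetCard]
    refine ⟨⟨union_subset hYB hAB, ?_⟩, subset_union_right⟩
    rw [card_union_of_disjoint hYA, hYc]
    omega
  · intro X hX
    simp only [mem_filter, mem_powersetCard] at hX
    exact sdiff_union_of_subset hX.2
  · intro Y hY
    simp only [mem_powersetCard] at hY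
    have hYA : Disjoint Y A := Finset.disjoint_left.mpr
      (fun a ha hA => (Finset.mem_sdiff.mp (hY.1 ha)).2 hA)
    rw [union_sdiff_distrib, sdiff_self, sdiff_eq_self_of_disjoint hYA]
    simp


/-- Counting `k`-subsets `K` of `s` containing `T` with `#(K ∩ T') = j`. -/
lemma count_inter (s T T' : Finset α) (k j : ℕ) (hT : T ⊆ s) (hT' : T' ⊆ s)
    (htk : T.card ≤ k) :
    ((s.powersetCard k).filter (fun K => T ⊆ K ∧ (K ∩ T').card = j)).card =
    if (T ∩ T').card ≤ j ∧ j - (T ∩ T').card ≤ k - T.card then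
      (T'.card - (T ∩ T').card).choose (j - (T ∩ T').card) *
      ((s \ (T ∪ T')).card).choose ((k - T.card) - (j - (T ∩ T').card))
    else 0 := by
  set i := (T ∩ T').card with hi
  have hbasic : ∀ K ∈ (s.powersetCard k).filter (fun K => T ⊆ K ∧ (K ∩ T').card = j),
      i ≤ j ∧ j - i ≤ k - T.card := by
    intro K hK
    simp only [mem_filter, mem_powersetCard] at hK
    obtain ⟨⟨hKs, hKc⟩, hTK, hKj⟩ := hK
    have h1 : T ∩ T' ⊆ K ∩ T' := inter_subset_inter hTK le_rfl
    have hij : i ≤ j := hKj ▸ card_le_card h1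
    have h2 : (K ∩ T') \ (T ∩ T') ⊆ K \ T := by
      intro x hx
      simp only [mem_sdiff, mem_inter] at hx ⊢
      exact ⟨hx.1.1, fun hxT => hx.2 ⟨hxT, hx.1.2⟩⟩
    have h3 := card_le_card h2
    rw [card_sdiff_of_subset h1, card_sdiff_of_subset hTK, hKj, hKc] at h3
    exact ⟨hij, h3⟩
  split_ifs with h
  · -- bijection
    obtain ⟨hij, hjk⟩ := h
    have hTT' : (T' \ T).card = T'.card - i := by
      rw [hi, ← card_sdiff_of_subset (inter_subset_right (s₁ := T) (s₂ := T'))]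
      congr 1
      ext x; simp only [mem_sdiff, mem_inter]; tauto
    rw [← hTT', ← card_powersetCard (j - i) (T' \ T),
        ← card_powersetCard ((k - T.card) - (j - i)) (s \ (T ∪ T')), ← card_product]
    apply Finset.card_bij' (fun K _ => (K ∩ (T' \ T), K \ (T ∪ T')))
      (fun q _ => T ∪ q.1 ∪ q.2)
    · -- forward membership
      intro K hK
      have hb := hbasic K hK
      simp only [mem_filter, mem_powersetCard] at hK
      obtain ⟨⟨hKs, hKc⟩, hTK, hKj⟩ := hK
      simp only [mem_product, mem_powersetCard]
      have hc1 : (K ∩ (T' \ T)).card = j - i := by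
        have : K ∩ (T' \ T) = (K ∩ T') \ (T ∩ T') := by
          ext x; simp only [mem_inter, mem_sdiff]
          constructor
          · rintro ⟨hxK, hxT', hxT⟩; exact ⟨⟨hxK, hxT'⟩, fun hh => hxT hh.1⟩
          · rintro ⟨⟨hxK, hxT'⟩, hh⟩; exact ⟨hxK, hxT', fun hxT => hh ⟨hxT, hxT'⟩⟩
        rw [this, card_sdiff_of_subset (inter_subset_inter hTK le_rfl), hKj]
      have hc2 : (K \ (T ∪ T')).card = k - T.card - (j - i) := by
        have hsplit : K \ T = (K ∩ (T' \ T)) ∪ (K \ (T ∪ T')) := by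
          ext x; simp only [mem_sdiff, mem_inter, mem_union]
          constructor
          · rintro ⟨hxK, hxT⟩
            by_cases hx' : x ∈ T'
            · exact Or.inl ⟨hxK, hx', hxT⟩
            · exact Or.inr ⟨hxK, fun hh => hh.elim hxT hx'⟩
          · rintro (⟨hxK, _, hxT⟩ | ⟨hxK, hh⟩)
            · exact ⟨hxK, hxT⟩
            · exact ⟨hxK, fun ht => hh (Or.inl ht)⟩
        have hdisj : Disjoint (K ∩ (T' \ T)) (K \ (T ∪ T')) := by
          refine disjoint_left.mpr ?_
          intro x hx1 hx2
          simp only [mem_inter, mem_sdiff, mem_union] at hx1 hx2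
          exact hx2.2 (Or.inr hx1.2.1)
        have := card_union_of_disjoint hdisj
        rw [← hsplit, card_sdiff_of_subset hTK, hKc, hc1] at this
        omega
      refine ⟨⟨inter_subset_right, hc1⟩, ⟨?_, hc2⟩⟩
      intro x hx
      simp only [mem_sdiff, mem_union] at hx ⊢
      exact ⟨hKs hx.1, hx.2⟩
    · -- backward membership
      rintro ⟨X, Y⟩ hq
      simp only [mem_product, mem_powersetCard] at hq
      obtain ⟨⟨hX, hXc⟩, hY, hYc⟩ := hq
      have hXT : Disjoint X T := disjoint_left.mpr
        (fun x hx hT => (mem_sdiff.mp (hX hx)).2 hT)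
      have hYTT : Disjoint Y (T ∪ T') := disjoint_left.mpr
        (fun x hx h => (mem_sdiff.mp (hY hx)).2 h)
      simp only [mem_filter, mem_powersetCard]
      have hcard : (T ∪ X ∪ Y).card = k := by
        rw [card_union_of_disjoint, card_union_of_disjoint hXT.symm]
        · omega
        · refine disjoint_left.mpr ?_
          intro x hx hy
          have := mem_sdiff.mp (hY hy)
          rcases mem_union.mp hx with h1 | h2
          · exact this.2 (mem_union.mpr (Or.inl h1))
          · exact this.2 (mem_union.mpr (Or.inr (mem_sdiff.mp (hX h2)).1))
      refine ⟨⟨?_, hcard⟩, ?_, ?_⟩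
      · intro x hx
        rcases mem_union.mp hx with h1 | h2
        · rcases mem_union.mp h1 with ha | hb
          · exact hT ha
          · exact hT' (mem_sdiff.mp (hX hb)).1
        · exact (mem_sdiff.mp (hY h2)).1
      · exact subset_union_left.trans subset_union_left
      · have : (T ∪ X ∪ Y) ∩ T' = (T ∩ T') ∪ X := by
          ext x
          simp only [mem_inter, mem_union]
          constructor
          · rintro ⟨h1 | h2, hx'⟩
            · rcases h1 with ha | hb
              · exact Or.inl ⟨ha, hx'⟩
              · exact Or.inr hb
            · exact absurd (mem_union.mpr (Or.inr hx')) (mem_sdiff.mp (hY h2)).2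
          · rintro (⟨ha, hb⟩ | hc)
            · exact ⟨Or.inl (Or.inl ha), hb⟩
            · exact ⟨Or.inl (Or.inr hc), (mem_sdiff.mp (hX hc)).1⟩
        rw [this, card_union_of_disjoint, hXc]
        · omega
        · refine disjoint_left.mpr ?_
          intro x hx hX'
          exact (mem_sdiff.mp (hX hX')).2 (mem_inter.mp hx).1
    · -- left inverse
      intro K hK
      simp only [mem_filter, mem_powersetCard] at hK
      obtain ⟨⟨hKs, hKc⟩, hTK, hKj⟩ := hK
      ext x
      simp only [mem_union, mem_inter, mem_sdiff]
      constructor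
      · rintro ((h1 | h2) | h3)
        · exact hTK h1
        · exact h2.1
        · exact h3.1
      · intro hxK
        by_cases hxT : x ∈ T
        · exact Or.inl (Or.inl hxT)
        · by_cases hxT' : x ∈ T'
          · exact Or.inl (Or.inr ⟨hxK, hxT', hxT⟩)
          · exact Or.inr ⟨hxK, fun h => h.elim hxT hxT'⟩
    · -- right inverse
      rintro ⟨X, Y⟩ hq
      simp only [mem_product, mem_powersetCard] at hq
      obtain ⟨⟨hX, hXc⟩, hY, hYc⟩ := hq
      have hXT : ∀ x ∈ X, x ∈ T' ∧ x ∉ T := fun x hx => mem_sdiff.mp (hX hx)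
      have hYs : ∀ y ∈ Y, y ∈ s ∧ y ∉ T ∪ T' := fun y hy => mem_sdiff.mp (hY hy)
      have e1 : (T ∪ X ∪ Y) ∩ (T' \ T) = X := by
        ext x
        simp only [mem_inter, mem_union, mem_sdiff]
        constructor
        · rintro ⟨h1 | h2, hx', hxT⟩
          · rcases h1 with ha | hb
            · exact absurd ha hxT
            · exact hb
          · exact absurd (mem_union.mpr (Or.inr hx')) (hYs x h2).2
        · intro hx
          exact ⟨Or.inl (Or.inr hx), (hXT x hx).1, (hXT x hx).2⟩
      have e2 : (T ∪ X ∪ Y) \ (T ∪ T') = Y := by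
        ext x
        simp only [mem_sdiff, mem_union]
        constructor
        · rintro ⟨h1 | h2, hno⟩
          · rcases h1 with ha | hb
            · exact absurd (Or.inl ha) hno
            · exact absurd (Or.inr (hXT x hb).1) hno
          · exact h2
        · intro hx
          exact ⟨Or.inr hx, fun hh => (hYs x hx).2 (mem_union.mpr hh)⟩
      rw [e1, e2]
  · -- empty
    rw [Finset.card_eq_zero, Finset.filter_eq_empty_iff]
    intro K hK
    by_contra hcon
    push_neg at h
    rcases Decidable.em (T ⊆ K ∧ (K ∩ T').card = j) with hyes | hno
    · have := hbasic K (mem_filter.mpr ⟨hK, hyes⟩)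
      omega
    · exact hno hcon

lemma sum_powersetCard_split {M : Type*} [AddCommMonoid M] (s : Finset α) {a : α}
    (ha : a ∈ s) (t : ℕ) (f : Finset α → M) :
    ∑ T ∈ s.powersetCard (t+1), f T
      = (∑ T ∈ (s.erase a).powersetCard (t+1), f T)
        + ∑ T ∈ (s.erase a).powersetCard t, f (insert a T) := by
  conv_lhs => rw [← insert_erase ha]
  rw [powersetCard_succ_insert (notMem_erase a s), sum_union, sum_image]
  · intro x hx y hy hxy
    have hax : a ∉ x := fun h => (notMem_erase a s) ((mem_powersetCard.mp hx).1 h)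
    have hay : a ∉ y := fun h => (notMem_erase a s) ((mem_powersetCard.mp hy).1 h)
    rw [← erase_insert hax, ← erase_insert hay, hxy]
  · refine disjoint_left.mpr ?_
    intro T hT1 hT2
    obtain ⟨T₀, hT₀, rfl⟩ := mem_image.mp hT2
    exact (notMem_erase a s) ((mem_powersetCard.mp hT1).1 (mem_insert_self a T₀))

lemma prime_not_dvd_choose {p a b : ℕ} (hp : p.Prime) (ha : a < p) (hba : b ≤ a) :
    ¬ p ∣ a.choose b := by
  intro hdvd
  have h1 : a.choose b * (b.factorial * (a - b).factorial) = a.factorial := by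
    rw [← mul_assoc]; exact Nat.choose_mul_factorial_mul_factorial hba
  have : p ∣ a.factorial := h1 ▸ hdvd.mul_right _
  exact absurd (hp.dvd_factorial.mp this) (by omega)


/-- The count of `k`-subsets `K ⊆ s` with `T ⊆ K`, `#(K ∩ T') = j`, where
`#s = t + k`, `#T = #T' = t`, `i = #(T ∩ T')`. -/
def sqN (t k i j : ℕ) : ℕ :=
  if i ≤ j ∧ j - i ≤ k - t then
    (t - i).choose (j - i) * ((t + k - (2*t - i)).choose ((k - t) - (j - i)))
  else 0

lemma sqN_eq_zero (t k i j : ℕ) (h : j < i) : sqN t k i j = 0 :=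
  if_neg (by omega)

lemma sqN_diag (t k i : ℕ) (hik : i ≤ t) (htk : t ≤ k) :
    sqN t k i i = (k - t + i).choose (k - t) := by
  rw [sqN, if_pos ⟨le_rfl, by omega⟩]
  have h1 : t + k - (2*t - i) = k - t + i := by omega
  simp [h1]

theorem main_indep (p : ℕ) [Fact p.Prime] :
    ∀ (N : ℕ) (s : Finset α) (t k : ℕ), s.card = N → t < k → k < p → t + k ≤ N →
    ∀ u : Finset α → ZMod p,
      (∀ T, T ∉ s.powersetCard t → u T = 0) →
      (∀ K ∈ s.powersetCard k, ∑ T ∈ s.powersetCard t, u T * (if T ⊆ K then 1 else 0) = 0) →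
      ∀ T, u T = 0 := by
  intro N
  induction N using Nat.strong_induction_on with
  | _ N IH =>
  intro s t k hsN htk hkp htkN u hsupp hrel
  have hp : p.Prime := Fact.out
  by_cases hsq : t + k = N
  case neg =>
    -- inductive case: t + k < N
    have htkN' : t + k < N := lt_of_le_of_ne htkN hsq
    have hs0 : s.Nonempty := by rw [← card_pos, hsN]; omega
    obtain ⟨a, ha⟩ := hs0
    have hs'c : (s.erase a).card = N - 1 := by rw [card_erase_of_mem ha, hsN]
    have hss : s.erase a ⊆ s := erase_subset a s
    -- step 1 : u vanishes on sets not containing a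
    have step1 : ∀ T, a ∉ T → u T = 0 := by
      have := IH (N-1) (by omega) (s.erase a) t k hs'c htk hkp (by omega)
        (fun T => if a ∈ T then 0 else u T)
        (by
          intro T hT
          by_cases haT : a ∈ T
          · simp [haT]
          · simp only [haT, if_false]
            apply hsupp
            intro hTs
            apply hT
            rw [mem_powersetCard] at hTs ⊢
            exact ⟨fun x hx => mem_erase.mpr ⟨fun h => haT (h ▸ hx), hTs.1 hx⟩, hTs.2⟩)
        (by
          intro K hK
          have hKs : K ∈ s.powersetCard k := by
            rw [mem_powersetCard] at hK ⊢
            exact ⟨hK.1.trans hss, hK.2⟩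
          have haK : a ∉ K := fun h => (notMem_erase a s) ((mem_powersetCard.mp hK).1 h)
          have e1 : ∑ T ∈ (s.erase a).powersetCard t,
              (if a ∈ T then 0 else u T) * (if T ⊆ K then (1 : ZMod p) else 0)
              = ∑ T ∈ (s.erase a).powersetCard t, u T * (if T ⊆ K then 1 else 0) := by
            apply sum_congr rfl
            intro T hT
            have : a ∉ T := fun h => (notMem_erase a s) ((mem_powersetCard.mp hT).1 h)
            simp [this]
          have e2 : ∑ T ∈ (s.erase a).powersetCard t, u T * (if T ⊆ K then (1:ZMod p) else 0)
              = ∑ T ∈ s.powersetCard t, u T * (if T ⊆ K then 1 else 0) := by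
            apply Finset.sum_subset
            · intro T hT
              rw [mem_powersetCard] at hT ⊢
              exact ⟨hT.1.trans hss, hT.2⟩
            · intro T hT hT'
              have haT : a ∈ T := by
                by_contra haT
                apply hT'
                rw [mem_powersetCard] at hT ⊢
                exact ⟨fun x hx => mem_erase.mpr ⟨fun h => haT (h ▸ hx), hT.1 hx⟩, hT.2⟩
              have : ¬ T ⊆ K := fun h => haK (h haT)
              simp [this]
          rw [e1, e2]
          exact hrel K hKs)
      intro T haT
      have := this T
      simpa [haT] using this
    -- step 2 : u vanishes on sets containing a
    intro T
    by_cases hTs : T ∈ s.powersetCard t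
    · by_cases haT : a ∈ T
      · -- t must be positive
        obtain ⟨t', rfl⟩ : ∃ t', t = t' + 1 := by
          have : 0 < t := by
            rw [mem_powersetCard] at hTs
            have := card_pos.mpr ⟨a, haT⟩
            omega
          exact ⟨t - 1, by omega⟩
        obtain ⟨k', rfl⟩ : ∃ k', k = k' + 1 := ⟨k - 1, by omega⟩
        have step2 := IH (N-1) (by omega) (s.erase a) t' k' hs'c (by omega) (by omega)
          (by omega)
          (fun T₀ => if a ∈ T₀ then 0 else u (insert a T₀))
          (by
            intro T₀ hT₀
            by_cases haT₀ : a ∈ T₀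
            · simp [haT₀]
            · simp only [haT₀, if_false]
              apply hsupp
              intro hmem
              apply hT₀
              rw [mem_powersetCard] at hmem ⊢
              constructor
              · intro x hx
                refine mem_erase.mpr ⟨fun h => haT₀ (h ▸ hx), hmem.1 (mem_insert_of_mem hx)⟩
              · have := hmem.2
                rw [card_insert_of_notMem haT₀] at this
                omega)
          (by
            intro K₀ hK₀
            rw [mem_powersetCard] at hK₀
            have haK₀ : a ∉ K₀ := fun h => (notMem_erase a s) (hK₀.1 h)
            have hKmem : insert a K₀ ∈ s.powersetCard (k'+1) := by
              rw [mem_powersetCard]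
              exact ⟨insert_subset ha (hK₀.1.trans hss),
                by rw [card_insert_of_notMem haK₀, hK₀.2]⟩
            have hrelK := hrel _ hKmem
            rw [sum_powersetCard_split s ha t'] at hrelK
            have z1 : ∑ T ∈ (s.erase a).powersetCard (t'+1),
                u T * (if T ⊆ insert a K₀ then (1:ZMod p) else 0) = 0 := by
              apply sum_eq_zero
              intro T hT
              have : a ∉ T := fun h => (notMem_erase a s) ((mem_powersetCard.mp hT).1 h)
              rw [step1 T this, zero_mul]
            rw [z1, zero_add] at hrelK
            refine Eq.trans ?_ hrelK
            apply sum_congr rfl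
            intro T₀ hT₀
            have haT₀ : a ∉ T₀ := fun h => (notMem_erase a s) ((mem_powersetCard.mp hT₀).1 h)
            have hiff : T₀ ⊆ K₀ ↔ insert a T₀ ⊆ insert a K₀ := by
              constructor
              · exact fun h => insert_subset_insert a h
              · intro h x hx
                have := h (mem_insert_of_mem hx)
                rcases mem_insert.mp this with h1 | h2
                · exact absurd (h1 ▸ hx) haT₀
                · exact h2
            simp only [haT₀, if_false]
            by_cases hsub : T₀ ⊆ K₀
            · rw [if_pos hsub, if_pos (hiff.mp hsub)]
            · rw [if_neg hsub, if_neg (fun h => hsub (hiff.mpr h))])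
        have hTe : T.erase a ∈ (s.erase a).powersetCard t' := by
          rw [mem_powersetCard] at hTs ⊢
          exact ⟨fun x hx => mem_erase.mpr ⟨(mem_erase.mp hx).1,
            hTs.1 (mem_of_mem_erase hx)⟩, by rw [card_erase_of_mem haT, hTs.2]; omega⟩
        have h2 : (if a ∈ T.erase a then 0 else u (insert a (T.erase a))) = 0 :=
          step2 (T.erase a)
        rw [if_neg (notMem_erase a T), insert_erase haT] at h2
        exact h2
      · exact step1 T haT
    · exact hsupp T hTs
  case pos =>
    -- square case : t + k = N
    have hsc : s.card = t + k := by omega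
    have htkle : t ≤ k := le_of_lt htk
    haveI : NeZero p := ⟨hp.ne_zero⟩
    have hcount : ∀ T ∈ s.powersetCard t, ∀ T' ∈ s.powersetCard t, ∀ j : ℕ,
        ((s.powersetCard k).filter (fun K => T ⊆ K ∧ (K ∩ T').card = j)).card
          = sqN t k (T ∩ T').card j := by
      intro T hT T' hT' j
      rw [mem_powersetCard] at hT hT'
      rw [count_inter s T T' k j hT.1 hT'.1 (by rw [hT.2]; omega)]
      have h3 : (T ∩ T').card ≤ t := by
        rw [← hT.2]; exact card_le_card inter_subset_left
      have hcard : (s \ (T ∪ T')).card = t + k - (2*t - (T ∩ T').card) := by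
        have h1 : (T ∪ T').card + (T ∩ T').card = T.card + T'.card :=
          card_union_add_card_inter T T'
        have h2 : (s \ (T ∪ T')).card = s.card - (T ∪ T').card :=
          card_sdiff_of_subset (union_subset hT.1 hT'.1)
        omega
      rw [hT.2, hT'.2, hcard]
      simp only [sqN]
    -- the triangular matrix of counts
    set NM : Matrix (Fin (t+1)) (Fin (t+1)) (ZMod p) :=
      Matrix.of (fun i j : Fin (t+1) => ((sqN t k (i : ℕ) (j : ℕ) : ℕ) : ZMod p)) with hNM
    have htri : NM.BlockTriangular id := by
      intro i j hij
      have hij' : (j : ℕ) < (i : ℕ) := hij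
      show ((sqN t k (i : ℕ) (j : ℕ) : ℕ) : ZMod p) = 0
      rw [sqN_eq_zero t k _ _ hij']
      exact Nat.cast_zero
    have hdiagne : ∀ i : Fin (t+1), NM i i ≠ 0 := by
      intro i
      show ((sqN t k (i : ℕ) (i : ℕ) : ℕ) : ZMod p) ≠ 0
      rw [sqN_diag t k (i : ℕ) (by omega) htkle, Ne,
        ZMod.natCast_eq_zero_iff]
      have hi : (i : ℕ) ≤ t := by omega
      exact prime_not_dvd_choose hp (by omega) (by omega)
    have hdet : IsUnit NM.det := by
      rw [Matrix.det_of_upperTriangular htri]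
      exact isUnit_iff_ne_zero.mpr (Finset.prod_ne_zero_iff.mpr (fun i _ => hdiagne i))
    set cv : Fin (t+1) → ZMod p := NM⁻¹ *ᵥ Pi.single (Fin.last t) (1 : ZMod p) with hcv
    have hNc : NM *ᵥ cv = Pi.single (Fin.last t) (1 : ZMod p) := by
      rw [hcv, Matrix.mulVec_mulVec, Matrix.mul_nonsing_inv _ hdet, Matrix.one_mulVec]
    intro T'
    by_cases hT's : T' ∈ s.powersetCard t
    swap
    · exact hsupp T' hT's
    have hT'sub := (mem_powersetCard.mp hT's).1
    have hT'card := (mem_powersetCard.mp hT's).2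
    have hKT' : ∀ K : Finset α, (K ∩ T').card ≤ t := fun K => by
      rw [← hT'card]; exact card_le_card inter_subset_right
    set g : Finset α → Fin (t+1) :=
      fun K => ⟨(K ∩ T').card, Nat.lt_succ_of_le (hKT' K)⟩ with hg
    have key : ∀ T ∈ s.powersetCard t,
        (∑ K ∈ s.powersetCard k, (if T ⊆ K then (1 : ZMod p) else 0) * cv (g K))
          = if T = T' then 1 else 0 := by
      intro T hT
      have hTsub := (mem_powersetCard.mp hT).1
      have hTcard := (mem_powersetCard.mp hT).2
      have hi : (T ∩ T').card ≤ t := by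
        rw [← hTcard]; exact card_le_card inter_subset_left
      rw [← Finset.sum_fiberwise_of_maps_to (g := g) (t := Finset.univ)
        (fun K _ => mem_univ _)
        (fun K => (if T ⊆ K then (1 : ZMod p) else 0) * cv (g K))]
      have fib : ∀ j : Fin (t+1),
          (∑ K ∈ (s.powersetCard k).filter (fun K => g K = j),
            (if T ⊆ K then (1 : ZMod p) else 0) * cv (g K))
          = NM ⟨(T ∩ T').card, Nat.lt_succ_of_le hi⟩ j * cv j := by
        intro j
        have e1 : ∀ K ∈ (s.powersetCard k).filter (fun K => g K = j),
            (if T ⊆ K then (1 : ZMod p) else 0) * cv (g K)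
              = if T ⊆ K then cv j else 0 := by
          intro K hK
          rw [(mem_filter.mp hK).2, ite_mul, one_mul, zero_mul]
        rw [Finset.sum_congr rfl e1, Finset.sum_ite, Finset.sum_const,
          Finset.sum_const_zero, add_zero, nsmul_eq_mul, filter_filter]
        have e2 : (s.powersetCard k).filter (fun K => g K = j ∧ T ⊆ K)
            = (s.powersetCard k).filter (fun K => T ⊆ K ∧ (K ∩ T').card = (j : ℕ)) := by
          apply filter_congr
          intro K _
          simp only [hg, Fin.ext_iff]
          constructor
          · rintro ⟨h1, h2⟩; exact ⟨h2, h1⟩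
          · rintro ⟨h1, h2⟩; exact ⟨h2, h1⟩
        rw [e2, hcount T hT T' hT's (j : ℕ)]
        rfl
      rw [Finset.sum_congr rfl (fun j _ => fib j)]
      have : (∑ j : Fin (t+1), NM ⟨(T ∩ T').card, Nat.lt_succ_of_le hi⟩ j * cv j)
          = (NM *ᵥ cv) ⟨(T ∩ T').card, Nat.lt_succ_of_le hi⟩ := rfl
      rw [this, hNc, Pi.single_apply]
      have hcond : ((⟨(T ∩ T').card, Nat.lt_succ_of_le hi⟩ : Fin (t+1)) = Fin.last t)
          ↔ T = T' := by
        rw [Fin.ext_iff]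
        show (T ∩ T').card = t ↔ T = T'
        constructor
        · intro hc
          have h1 : T ∩ T' = T := by
            apply Finset.eq_of_subset_of_card_le inter_subset_left
            rw [hc, hTcard]
          have h2 : T ⊆ T' := by rw [← h1]; exact inter_subset_right
          exact Finset.eq_of_subset_of_card_le h2 (by rw [hTcard, hT'card])
        · intro h; rw [h, inter_self, hT'card]
      simp only [hcond]
    -- combine
    have h0 : (∑ K ∈ s.powersetCard k,
        cv (g K) * (∑ T ∈ s.powersetCard t, u T * (if T ⊆ K then (1 : ZMod p) else 0))) = 0 :=
      Finset.sum_eq_zero (fun K hK => by rw [hrel K hK, mul_zero])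
    have h1 : (∑ K ∈ s.powersetCard k,
        cv (g K) * (∑ T ∈ s.powersetCard t, u T * (if T ⊆ K then (1 : ZMod p) else 0)))
        = ∑ T ∈ s.powersetCard t, u T *
            (∑ K ∈ s.powersetCard k, (if T ⊆ K then (1 : ZMod p) else 0) * cv (g K)) := by
      calc (∑ K ∈ s.powersetCard k,
            cv (g K) * (∑ T ∈ s.powersetCard t, u T * (if T ⊆ K then (1 : ZMod p) else 0)))
          = ∑ K ∈ s.powersetCard k, ∑ T ∈ s.powersetCard t,
              u T * ((if T ⊆ K then (1 : ZMod p) else 0) * cv (g K)) := by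
            refine Finset.sum_congr rfl (fun K _ => ?_)
            rw [Finset.mul_sum]
            exact Finset.sum_congr rfl (fun T _ => by ring)
        _ = ∑ T ∈ s.powersetCard t, ∑ K ∈ s.powersetCard k,
              u T * ((if T ⊆ K then (1 : ZMod p) else 0) * cv (g K)) := Finset.sum_comm
        _ = ∑ T ∈ s.powersetCard t, u T *
              (∑ K ∈ s.powersetCard k, (if T ⊆ K then (1 : ZMod p) else 0) * cv (g K)) := by
            exact Finset.sum_congr rfl (fun T _ => (Finset.mul_sum _ _ _).symm)
    rw [h1] at h0
    have hsc2 : (∑ T ∈ s.powersetCard t, u T *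
            (∑ K ∈ s.powersetCard k, (if T ⊆ K then (1 : ZMod p) else 0) * cv (g K)))
        = ∑ T ∈ s.powersetCard t, u T * (if T = T' then (1 : ZMod p) else 0) :=
      Finset.sum_congr rfl (fun T hT => by rw [key T hT])
    have h2 : (∑ T ∈ s.powersetCard t, u T * (if T = T' then (1 : ZMod p) else 0)) = 0 :=
      hsc2.symm.trans h0
    have h3 : (∑ T ∈ s.powersetCard t, u T * (if T = T' then (1 : ZMod p) else 0)) = u T' := by
      calc (∑ T ∈ s.powersetCard t, u T * (if T = T' then (1 : ZMod p) else 0))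
          = ∑ T ∈ s.powersetCard t, (if T = T' then u T else 0) :=
            Finset.sum_congr rfl (fun T _ => by rw [mul_ite, mul_one, mul_zero])
        _ = if T' ∈ s.powersetCard t then u T' else 0 := Finset.sum_ite_eq' _ _ _
        _ = u T' := if_pos hT's
    rw [← h3]
    exact h2

end Aux

section RankGlue

variable {p : ℕ} [Fact p.Prime] {m n : Type*} [Fintype m] [Fintype n]
  [DecidableEq m] [DecidableEq n]

lemma rank_eq_card_of_inj (A : Matrix m n (ZMod p))
    (h : Function.Injective Aᵀ.mulVecLin) : A.rank = Fintype.card m := by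
  rw [← Matrix.rank_transpose, Matrix.rank, LinearMap.finrank_range_of_inj h,
    Module.finrank_pi]

lemma rank_lt_card_of_ker (A : Matrix m n (ZMod p)) (v : n → ZMod p) (hv : v ≠ 0)
    (h : A.mulVec v = 0) : A.rank < Fintype.card n := by
  have h1 := LinearMap.finrank_range_add_finrank_ker A.mulVecLin
  rw [Module.finrank_pi] at h1
  have h3 : 0 < Module.finrank (ZMod p) (LinearMap.ker A.mulVecLin) := by
    rw [Module.finrank_pos_iff]
    refine ⟨⟨v, ?_⟩, 0, ?_⟩
    · rw [LinearMap.mem_ker, Matrix.mulVecLin_apply, h]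
    · intro hc
      rw [Submodule.mk_eq_zero] at hc
      exact hv hc
  rw [Matrix.rank]
  omega

lemma rank_reindex_rect {m' n' : Type*} [Fintype m'] [Fintype n']
    (e₁ : m ≃ m') (e₂ : n ≃ n') (A : Matrix m n (ZMod p)) :
    (Matrix.reindex e₁ e₂ A).rank = A.rank := by
  rw [Matrix.rank, Matrix.rank, Matrix.mulVecLin_reindex, LinearMap.range_comp,
    LinearMap.range_comp, LinearEquiv.range, Submodule.map_top,
    LinearEquiv.finrank_map_eq]

lemma rank_submatrix_rect {m' n' : Type*} [Fintype m'] [Fintype n']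
    (e₁ : m' ≃ m) (e₂ : n' ≃ n) (A : Matrix m n (ZMod p)) :
    (A.submatrix e₁ e₂).rank = A.rank := by
  rw [← rank_reindex_rect e₁.symm e₂.symm A, Matrix.reindex_apply,
    Equiv.symm_symm, Equiv.symm_symm]

end RankGlue

lemma choose_le_choose_of (n t k : ℕ) (h1 : t ≤ k) (h2 : t + k ≤ n) :
    n.choose t ≤ n.choose k := by
  have mono_up : ∀ a b : ℕ, a ≤ b → 2*b ≤ n → n.choose a ≤ n.choose b := by
    intro a b hab h2b
    induction b, hab using Nat.le_induction with
    | base => exact le_rfl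
    | succ b hb ih =>
      refine (ih (by omega)).trans (Nat.choose_le_succ_of_lt_half_left ?_)
      omega
  by_cases hk : 2*k ≤ n
  · exact mono_up t k h1 hk
  · have hkn : k ≤ n := by omega
    have := mono_up t (n-k) (by omega) (by omega)
    rwa [Nat.choose_symm hkn] at this

-- now the real content
section Lef

variable (p n k t : ℕ) [Fact p.Prime]

lemma factorial_ne_zero_mod (h : k - t < p) : (((k-t).factorial : ℕ) : ZMod p) ≠ 0 := by
  have hp : p.Prime := Fact.out
  haveI : NeZero p := ⟨hp.ne_zero⟩
  rw [Ne, ZMod.natCast_eq_zero_iff]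
  intro hdvd
  have := (Nat.Prime.dvd_factorial hp).mp hdvd
  omega

lemma lefCardSubtype : Fintype.card {T : Finset (Fin n) // T.card = t} = n.choose t := by
  rw [Fintype.card_finset_len, Fintype.card_fin]

lemma lef_rank_full (htk : t < k) (hkn : k ≤ n) (htkn : t + k ≤ n) (hkp : k < p) :
    (lefMat p n k t).rank = n.choose t := by
  have hp : p.Prime := Fact.out
  rw [← lefCardSubtype n t]
  apply rank_eq_card_of_inj
  rw [injective_iff_map_eq_zero]
  intro u hu
  set ut : Finset (Fin n) → ZMod p := fun T => if h : T.card = t then u ⟨T, h⟩ else 0 with hut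
  have hc0 := factorial_ne_zero_mod p k t (by omega)
  have main := main_indep p n (univ : Finset (Fin n)) t k (by simp) htk hkp
    (by simpa using htkn) ut
    (by
      intro T hT
      rw [mem_powersetCard_univ] at hT
      exact dif_neg hT)
    (by
      intro K hK
      rw [mem_powersetCard_univ] at hK
      have h1 : ((lefMat p n k t)ᵀ.mulVec u) ⟨K, hK⟩ = 0 := by
        rw [show (lefMat p n k t)ᵀ.mulVec u = 0 from hu]
        rfl
      have h2 : (∑ T : {T : Finset (Fin n) // T.card = t},
          (if T.1 ⊆ K then (((k-t).factorial : ℕ) : ZMod p) else 0) * u T) = 0 := h1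
      have h3 : (∑ T ∈ (univ : Finset (Fin n)).powersetCard t,
            (if T ⊆ K then (((k-t).factorial : ℕ) : ZMod p) else 0) * ut T)
          = ∑ T : {T : Finset (Fin n) // T.card = t},
            (if T.1 ⊆ K then (((k-t).factorial : ℕ) : ZMod p) else 0) * u T := by
        rw [Finset.sum_subtype _ (fun _ => mem_powersetCard_univ) ]
        apply Finset.sum_congr rfl
        intro T _
        congr 1
        show ut T.1 = u T
        rw [hut]
        exact dif_pos T.2
      have h4 : (((k-t).factorial : ℕ) : ZMod p) *
          (∑ T ∈ (univ : Finset (Fin n)).powersetCard t, ut T * (if T ⊆ K then 1 else 0))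
          = 0 := by
        have e : (((k-t).factorial : ℕ) : ZMod p) *
            (∑ T ∈ (univ : Finset (Fin n)).powersetCard t, ut T * (if T ⊆ K then 1 else 0))
            = ∑ T ∈ (univ : Finset (Fin n)).powersetCard t,
              (if T ⊆ K then (((k-t).factorial : ℕ) : ZMod p) else 0) * ut T := by
          rw [Finset.mul_sum]
          exact Finset.sum_congr rfl (fun T _ => by split_ifs <;> ring)
        rw [e, h3]
        exact h2
      rcases mul_eq_zero.mp h4 with h | h
      · exact absurd h hc0
      · exact h)
  funext T
  have := main T.1
  rw [hut] at this
  simp only [dif_pos T.2] at this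
  exact this

end Lef

section Lef2

variable (p n k t : ℕ) [Fact p.Prime]

lemma lef_zero (h : p ≤ k - t) : lefMat p n k t = 0 := by
  have hp : p.Prime := Fact.out
  haveI : NeZero p := ⟨hp.ne_zero⟩
  have hc : (((k-t).factorial : ℕ) : ZMod p) = 0 := by
    rw [ZMod.natCast_eq_zero_iff]
    exact hp.dvd_factorial.mpr h
  ext T K
  show (if T.1 ⊆ K.1 then (((k-t).factorial : ℕ) : ZMod p) else 0) = 0
  rw [hc, ite_self]

lemma lef_rank_lt_rows (htk : t < k) (hkn : k ≤ n) (h1 : k - t < p) (h2 : p ≤ k) :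
    (lefMat p n k t).rank < n.choose t := by
  have hp : p.Prime := Fact.out
  haveI : NeZero p := ⟨hp.ne_zero⟩
  have hkt1 : 1 ≤ k - t := by omega
  set j := p - (k - t) with hj
  have hjt : j ≤ t := by omega
  have hj0 : j ≠ 0 := by omega
  have hjp : j < p := by omega
  obtain ⟨S, -, hScard⟩ := Finset.exists_subset_card_eq
    (show t - j ≤ (univ : Finset (Fin n)).card by simp; omega)
  have hrk := rank_lt_card_of_ker ((lefMat p n k t)ᵀ)
    (fun T => if S ⊆ T.1 then 1 else 0) ?_ ?_
  · rwa [Matrix.rank_transpose, lefCardSubtype] at hrk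
  · -- nonzero
    obtain ⟨T₀, hST₀, -, hT₀c⟩ := Finset.exists_subsuperset_card_eq (t := univ) (n := t)
      (Finset.subset_univ S) (by omega) (by simp; omega)
    intro hc
    have := congrFun hc ⟨T₀, hT₀c⟩
    simp only [hST₀, if_pos] at this
    exact one_ne_zero this
  · -- kernel
    funext K
    show (∑ T : {T : Finset (Fin n) // T.card = t},
      (if T.1 ⊆ K.1 then (((k-t).factorial : ℕ) : ZMod p) else 0) *
        (if S ⊆ T.1 then 1 else 0)) = 0
    rw [← Finset.sum_subtype _ (fun _ => mem_powersetCard_univ)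
      (fun T => (if T ⊆ K.1 then (((k-t).factorial : ℕ) : ZMod p) else 0) *
        (if S ⊆ T then 1 else 0))]
    have e1 : ∀ T ∈ (univ : Finset (Fin n)).powersetCard t,
        (if T ⊆ K.1 then (((k-t).factorial : ℕ) : ZMod p) else 0) *
          (if S ⊆ T then 1 else 0)
        = if S ⊆ T ∧ T ⊆ K.1 then (((k-t).factorial : ℕ) : ZMod p) else 0 := by
      intro T _
      by_cases hA : S ⊆ T <;> by_cases hB : T ⊆ K.1 <;> simp [hA, hB]
    rw [Finset.sum_congr rfl e1, Finset.sum_ite, Finset.sum_const_zero, add_zero,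
      Finset.sum_const, nsmul_eq_mul]
    by_cases hSK : S ⊆ K.1
    · have e2 : ((univ : Finset (Fin n)).powersetCard t).filter
          (fun T => S ⊆ T ∧ T ⊆ K.1)
          = (K.1.powersetCard t).filter (fun T => S ⊆ T) := by
        ext T
        simp only [mem_filter, mem_powersetCard, subset_univ, true_and]
        tauto
      rw [e2, card_middle S K.1 t hSK (by omega)]
      have harith : K.1.card - S.card = p := by rw [K.2, hScard]; omega
      have harith2 : t - S.card = j := by rw [hScard]; omega
      rw [harith, harith2]
      have hz : ((p.choose j : ℕ) : ZMod p) = 0 := by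
        rw [ZMod.natCast_eq_zero_iff]
        exact hp.dvd_choose_self hj0 hjp
      rw [hz, zero_mul]
    · have e2 : ((univ : Finset (Fin n)).powersetCard t).filter
          (fun T => S ⊆ T ∧ T ⊆ K.1) = ∅ := by
        rw [Finset.filter_eq_empty_iff]
        rintro T - ⟨hST, hTK⟩
        exact hSK (hST.trans hTK)
      rw [e2]
      simp

lemma lef_rank_lt_cols (htk : t < k) (hkn : k ≤ n) (h1 : k - t < p) (h2 : p ≤ n - t) :
    (lefMat p n k t).rank < n.choose k := by
  have hp : p.Prime := Fact.out
  haveI : NeZero p := ⟨hp.ne_zero⟩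
  have hkt1 : 1 ≤ k - t := by omega
  set j := p - (k - t) with hj
  have hpj : k + j = p + t := by omega
  have hkj : k + j ≤ n := by omega
  obtain ⟨S, -, hScard⟩ := Finset.exists_subset_card_eq
    (show k + j ≤ (univ : Finset (Fin n)).card by simp; omega)
  have hrk := rank_lt_card_of_ker (lefMat p n k t)
    (fun K => if K.1 ⊆ S then 1 else 0) ?_ ?_
  · rwa [lefCardSubtype] at hrk
  · -- nonzero
    obtain ⟨K₀, -, hK₀S, hK₀c⟩ := Finset.exists_subsuperset_card_eq (s := ∅) (t := S) (n := k)
      (Finset.empty_subset S) (by simp) (by rw [hScard]; omega)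
    intro hc
    have := congrFun hc ⟨K₀, hK₀c⟩
    simp only [hK₀S, if_pos] at this
    exact one_ne_zero this
  · -- kernel
    funext T
    show (∑ K : {K : Finset (Fin n) // K.card = k},
      (if T.1 ⊆ K.1 then (((k-t).factorial : ℕ) : ZMod p) else 0) *
        (if K.1 ⊆ S then 1 else 0)) = 0
    rw [← Finset.sum_subtype _ (fun _ => mem_powersetCard_univ)
      (fun K => (if T.1 ⊆ K then (((k-t).factorial : ℕ) : ZMod p) else 0) *
        (if K ⊆ S then 1 else 0))]
    have e1 : ∀ K ∈ (univ : Finset (Fin n)).powersetCard k,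
        (if T.1 ⊆ K then (((k-t).factorial : ℕ) : ZMod p) else 0) *
          (if K ⊆ S then 1 else 0)
        = if T.1 ⊆ K ∧ K ⊆ S then (((k-t).factorial : ℕ) : ZMod p) else 0 := by
      intro K _
      by_cases hA : T.1 ⊆ K <;> by_cases hB : K ⊆ S <;> simp [hA, hB]
    rw [Finset.sum_congr rfl e1, Finset.sum_ite, Finset.sum_const_zero, add_zero,
      Finset.sum_const, nsmul_eq_mul]
    by_cases hTS : T.1 ⊆ S
    · have e2 : ((univ : Finset (Fin n)).powersetCard k).filter
          (fun K => T.1 ⊆ K ∧ K ⊆ S)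
          = (S.powersetCard k).filter (fun K => T.1 ⊆ K) := by
        ext K
        simp only [mem_filter, mem_powersetCard, subset_univ, true_and]
        tauto
      rw [e2, card_middle T.1 S k hTS (by rw [T.2]; omega)]
      have harith : S.card - T.1.card = p := by rw [T.2, hScard]; omega
      have harith2 : k - T.1.card = k - t := by rw [T.2]
      rw [harith, harith2]
      have hz : ((p.choose (k-t) : ℕ) : ZMod p) = 0 := by
        rw [ZMod.natCast_eq_zero_iff]
        exact hp.dvd_choose_self (by omega) (by omega)
      rw [hz, zero_mul]
    · have e2 : ((univ : Finset (Fin n)).powersetCard k).filter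
          (fun K => T.1 ⊆ K ∧ K ⊆ S) = ∅ := by
        rw [Finset.filter_eq_empty_iff]
        rintro K - ⟨hTK, hKS⟩
        exact hTS (hTK.trans hKS)
      rw [e2]
      simp

end Lef2

section Dual

variable (p n k t : ℕ) [Fact p.Prime]

/-- complementation equivalence -/
def complEquiv (n a : ℕ) (h : a ≤ n) :
    {T : Finset (Fin n) // T.card = a} ≃ {K : Finset (Fin n) // K.card = n - a} where
  toFun T := ⟨T.1ᶜ, by rw [Finset.card_compl, T.2, Fintype.card_fin]⟩
  invFun K := ⟨K.1ᶜ, by rw [Finset.card_compl, K.2, Fintype.card_fin]; omega⟩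
  left_inv T := by
    apply Subtype.ext
    exact compl_compl T.1
  right_inv K := by
    apply Subtype.ext
    exact compl_compl K.1

lemma lef_rank_dual (htk : t ≤ k) (hkn : k ≤ n) :
    (lefMat p n k t).rank = (lefMat p n (n-t) (n-k)).rank := by
  have htn : t ≤ n := htk.trans hkn
  have hmat : lefMat p n k t
      = ((lefMat p n (n-t) (n-k)).submatrix (complEquiv n k hkn) (complEquiv n t htn))ᵀ := by
    ext T K
    show (if T.1 ⊆ K.1 then (((k-t).factorial : ℕ) : ZMod p) else 0)
      = (if K.1ᶜ ⊆ T.1ᶜ then ((((n-t) - (n-k)).factorial : ℕ) : ZMod p) else 0)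
    have h1 : (n-t) - (n-k) = k - t := by omega
    rw [h1]
    by_cases hTK : T.1 ⊆ K.1
    · rw [if_pos hTK, if_pos (Finset.compl_subset_compl.mpr hTK)]
    · rw [if_neg hTK, if_neg (fun h => hTK (Finset.compl_subset_compl.mp h))]
  rw [hmat, Matrix.rank_transpose, rank_submatrix_rect]

end Dual

/-- For a prime `p` and `0 ≤ t < k ≤ n`, the matrix `(k−t)!·𝒜_{n,k,t}` over `𝔽_p`
has full rank `min (binom(n,t), binom(n,k))` if and only if `p > min(k, n−t)`. -/
theorem stmt_9 (p : ℕ) [Fact p.Prime] (n k t : ℕ) (htk : t < k) (hkn : k ≤ n) :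
    (lefMat p n k t).rank = min (n.choose t) (n.choose k) ↔ min k (n - t) < p := by
  have hp : p.Prime := Fact.out
  have htn : t ≤ n := by omega
  constructor
  · intro hrank
    by_contra hple
    push_neg at hple
    have hpk : p ≤ k := le_trans hple (min_le_left _ _)
    have hpnt : p ≤ n - t := le_trans hple (min_le_right _ _)
    by_cases hzero : p ≤ k - t
    · rw [lef_zero p n k t hzero, Matrix.rank_zero] at hrank
      have h1 : 0 < n.choose t := Nat.choose_pos htn
      have h2 : 0 < n.choose k := Nat.choose_pos hkn
      omega
    · push_neg at hzero
      have hlt1 := lef_rank_lt_rows p n k t htk hkn hzero hpk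
      have hlt2 := lef_rank_lt_cols p n k t htk hkn hzero hpnt
      omega
  · intro hplt
    by_cases hcase : t + k ≤ n
    · have hkp : k < p := by
        have : min k (n-t) = k := min_eq_left (by omega)
        omega
      rw [lef_rank_full p n k t htk hkn hcase hkp]
      have := choose_le_choose_of n t k htk.le hcase
      exact (min_eq_left this).symm
    · have hntp : n - t < p := by
        have : min k (n-t) = n-t := min_eq_right (by omega)
        omega
      rw [lef_rank_dual p n k t htk.le hkn,
        lef_rank_full p n (n-t) (n-k) (by omega) (by omega) (by omega) hntp,
        Nat.choose_symm hkn]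
      have hle : n.choose k ≤ n.choose t := by
        have := choose_le_choose_of n (n-k) (n-t) (by omega) (by omega)
        rwa [Nat.choose_symm hkn, Nat.choose_symm htn] at this
      exact (min_eq_right hle).symm
end

section
/- Let n > 2 be an odd integer with n ≡ 2 (mod 3) and let σ be a derangement of {1,…,n}. Then φ(σ) · ∏_{1 ≤ i < j ≤ n} p_{i,j} ∈ C_n. -/
attribute [local instance] Classical.propDecidable

/-- `G_n` is realized additively as the group of `ℤ`-valued functions on unordered
pairs from `{1,…,n}`; `pgen n i j` is the generator `p_{i,j} = p_{j,i}`. -/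
noncomputable def pgen (n : ℕ) (i j : Fin n) : Sym2 (Fin n) → ℤ :=
  Pi.single s(i, j) 1

/-- `φ(σ) = ∏_i p_{i,σ(i)}` (written additively). -/
noncomputable def phi (n : ℕ) (σ : Equiv.Perm (Fin n)) : Sym2 (Fin n) → ℤ :=
  ∑ i : Fin n, pgen n i (σ i)

/-- The subgroup `C_n ≤ G_n` generated by the elements
`c_{i,j,k} = p_{i,j}·p_{j,k}·p_{i,k}` for pairwise distinct `i,j,k`. -/
noncomputable def Cgrp (n : ℕ) : AddSubgroup (Sym2 (Fin n) → ℤ) :=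
  AddSubgroup.closure {x | ∃ i j k : Fin n, i ≠ j ∧ j ≠ k ∧ i ≠ k ∧
    x = pgen n i j + pgen n j k + pgen n i k}


/-! Summing the triangles `c_{a,b,j}` over all `j ∉ {a, b}` gives `(n - 4) p_{a,b} + s_a + s_b`,
where `s_a` is the sum of the generators at `a`. Summed over the edges `{i, σ i}` this gives
`(n - 4) φ(σ) + 4E`, and summed over all edges `3(n - 2) E`, where `E = ∏_{i<j} p_{i,j}`.
On five points `6 p_{a,b} ∈ C_n`, so only the coefficients mod 6 matter; for `n ≡ 5 (mod 6)`
the two sums are `φ(σ) + 4E` and `3E`, which add up to `φ(σ) + E`. -/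

open Finset

section Pairs

-- Decidability is taken as separate instances so that these lemmas also apply to sums formed
-- with the classical instances that are in force for the definitions.
variable {α M : Type*} [LinearOrder α] [Fintype α] [DecidableEq α] [DecidableLT α]
  [AddCommMonoid M]

theorem sum_sum_erase_eq_sum_lt_add_swap (f : α → α → M) :
    ∑ a, ∑ b ∈ univ.erase a, f a b =
      ∑ q ∈ univ.filter (fun q : α × α => q.1 < q.2), (f q.1 q.2 + f q.2 q.1) := by
  have split_ne (a : α) : ∑ b ∈ univ.erase a, f a b =
      ∑ b, (if a < b then f a b else 0) + ∑ b, (if b < a then f a b else 0) := by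
    rw [← filter_ne', sum_filter, ← sum_add_distrib]
    refine sum_congr rfl fun b _ => ?_
    rcases lt_trichotomy a b with h | rfl | h
    · simp [h, h.ne', h.not_gt]
    · simp
    · simp [h, h.ne, h.not_gt]
  rw [sum_filter, Fintype.sum_prod_type, sum_congr rfl fun a _ => split_ne a, sum_add_distrib,
    sum_comm (f := fun a b => if b < a then f a b else 0)]
  simp only [ite_add_zero, sum_add_distrib]

theorem sum_lt_add_eq_card_sub_one_smul_sum (s : α → M) :
    ∑ q ∈ univ.filter (fun q : α × α => q.1 < q.2), (s q.1 + s q.2) =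
      (Fintype.card α - 1) • ∑ a, s a := by
  rw [← sum_sum_erase_eq_sum_lt_add_swap (fun a _ => s a), smul_sum]
  refine sum_congr rfl fun a _ => ?_
  rw [sum_const, card_erase_of_mem (mem_univ a), card_univ]

end Pairs

section Triangles

variable {n : ℕ}

theorem pgen_comm (i j : Fin n) : pgen n i j = pgen n j i := by
  rw [pgen, pgen, Sym2.eq_swap]

theorem triangle_mem_Cgrp {i j k : Fin n} (hij : i ≠ j) (hjk : j ≠ k) (hik : i ≠ k) :
    pgen n i j + pgen n j k + pgen n i k ∈ Cgrp n :=
  AddSubgroup.subset_closure ⟨i, j, k, hij, hjk, hik, rfl⟩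

-- On five points: twice the triangles `abx` and `cde`, minus the six triangles with one vertex
-- in `{a, b}` and two in `{c, d, e}`, is `6 p_ab`.
theorem six_smul_pgen_mem_Cgrp (hn : 5 ≤ n) {a b : Fin n} (hab : a ≠ b) :
    (6 : ℤ) • pgen n a b ∈ Cgrp n := by
  obtain ⟨c, hc, d, hd, e, he, hcd, hce, hde⟩ :
      ∃ c ∈ (univ.erase a).erase b, ∃ d ∈ (univ.erase a).erase b,
        ∃ e ∈ (univ.erase a).erase b, c ≠ d ∧ c ≠ e ∧ d ≠ e := by
    rw [← two_lt_card, card_erase_of_mem (by simp [hab.symm]), card_erase_of_mem (mem_univ a),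
      card_univ, Fintype.card_fin]
    omega
  simp only [mem_erase, mem_univ, and_true] at hc hd he
  have six_eq : (6 : ℤ) • pgen n a b =
      2 • (pgen n c d + pgen n d e + pgen n c e) + 2 • (pgen n a b + pgen n b c + pgen n a c)
      + 2 • (pgen n a b + pgen n b d + pgen n a d) + 2 • (pgen n a b + pgen n b e + pgen n a e)
      - (pgen n a c + pgen n c d + pgen n a d) - (pgen n b c + pgen n c d + pgen n b d)
      - (pgen n a c + pgen n c e + pgen n a e) - (pgen n b c + pgen n c e + pgen n b e)
      - (pgen n a d + pgen n d e + pgen n a e) - (pgen n b d + pgen n d e + pgen n b e) := by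
    abel
  rw [six_eq]
  apply_rules [triangle_mem_Cgrp, zsmul_mem, sub_mem, add_mem] <;> tauto

noncomputable def incidentSum (n : ℕ) (a : Fin n) : Sym2 (Fin n) → ℤ :=
  ∑ j ∈ univ.erase a, pgen n a j

noncomputable def pairSum (n : ℕ) : Sym2 (Fin n) → ℤ :=
  ∑ q ∈ univ.filter (fun q : Fin n × Fin n => q.1 < q.2), pgen n q.1 q.2

theorem sum_incidentSum : ∑ a, incidentSum n a = 2 • pairSum n := by
  rw [pairSum, smul_sum]
  unfold incidentSum
  rw [sum_sum_erase_eq_sum_lt_add_swap (pgen n)]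
  exact sum_congr rfl fun q _ => by rw [pgen_comm q.2, two_smul]

theorem sum_triangles_erase {a b : Fin n} (hab : a ≠ b) :
    ∑ j ∈ (univ.erase a).erase b, (pgen n a b + pgen n b j + pgen n a j) =
      ((n : ℤ) - 4) • pgen n a b + incidentSum n a + incidentSum n b := by
  have hb : b ∈ univ.erase a := mem_erase.2 ⟨hab.symm, mem_univ b⟩
  have ha : a ∈ univ.erase b := mem_erase.2 ⟨hab, mem_univ a⟩
  have hcard : (((univ.erase a).erase b).card : ℤ) = n - 2 := by
    rw [card_erase_of_mem hb, card_erase_of_mem (mem_univ a), card_univ, Fintype.card_fin]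
    have hn : 2 ≤ n := by omega
    push_cast [Nat.sub_sub, hn]
    ring
  rw [incidentSum, incidentSum, ← add_sum_erase _ _ hb, ← add_sum_erase _ _ ha,
    erase_right_comm (a := b), sum_add_distrib, sum_add_distrib, sum_const, ← natCast_zsmul,
    hcard, pgen_comm b a]
  module

theorem smul_pgen_add_incidentSum_mem_Cgrp {a b : Fin n} (hab : a ≠ b) :
    ((n : ℤ) - 4) • pgen n a b + incidentSum n a + incidentSum n b ∈ Cgrp n := by
  rw [← sum_triangles_erase hab]
  refine sum_mem fun j hj => ?_
  obtain ⟨hjb, hja, -⟩ := mem_erase.1 hj |>.imp_right mem_erase.1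
  exact triangle_mem_Cgrp hab (Ne.symm hjb) (Ne.symm hja)

theorem smul_phi_add_sum_incidentSum_mem_Cgrp {σ : Equiv.Perm (Fin n)} (hσ : ∀ i, σ i ≠ i) :
    ((n : ℤ) - 4) • phi n σ + 2 • ∑ a, incidentSum n a ∈ Cgrp n := by
  have hsum : ∑ i, (((n : ℤ) - 4) • pgen n i (σ i) + incidentSum n i + incidentSum n (σ i)) =
      ((n : ℤ) - 4) • phi n σ + 2 • ∑ a, incidentSum n a := by
    rw [sum_add_distrib, sum_add_distrib, Equiv.sum_comp σ (incidentSum n), phi, smul_sum,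
      two_smul, add_assoc]
  rw [← hsum]
  exact sum_mem fun i _ => smul_pgen_add_incidentSum_mem_Cgrp (hσ i).symm

theorem smul_pairSum_add_sum_incidentSum_mem_Cgrp :
    ((n : ℤ) - 4) • pairSum n + (n - 1) • ∑ a, incidentSum n a ∈ Cgrp n := by
  have hsum : ∑ q ∈ univ.filter (fun q : Fin n × Fin n => q.1 < q.2),
      (((n : ℤ) - 4) • pgen n q.1 q.2 + incidentSum n q.1 + incidentSum n q.2) =
      ((n : ℤ) - 4) • pairSum n + (n - 1) • ∑ a, incidentSum n a := by
    simp only [add_assoc]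
    rw [sum_add_distrib, sum_lt_add_eq_card_sub_one_smul_sum, Fintype.card_fin, pairSum,
      ← smul_sum]
  rw [← hsum]
  exact sum_mem fun q hq => smul_pgen_add_incidentSum_mem_Cgrp (mem_filter.1 hq).2.ne

theorem six_smul_pairSum_mem_Cgrp (hn : 5 ≤ n) : (6 : ℤ) • pairSum n ∈ Cgrp n := by
  rw [pairSum, smul_sum]
  exact sum_mem fun q hq => six_smul_pgen_mem_Cgrp hn (mem_filter.1 hq).2.ne

theorem six_smul_phi_mem_Cgrp (hn : 5 ≤ n) {σ : Equiv.Perm (Fin n)} (hσ : ∀ i, σ i ≠ i) :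
    (6 : ℤ) • phi n σ ∈ Cgrp n := by
  rw [phi, smul_sum]
  exact sum_mem fun i _ => six_smul_pgen_mem_Cgrp hn (hσ i).symm

end Triangles

theorem stmt_15_general (n : ℕ) (hodd : Odd n) (hmod : n % 3 = 2)
    (σ : Equiv.Perm (Fin n)) (hσ : ∀ i, σ i ≠ i) :
    phi n σ + ∑ q ∈ Finset.univ.filter (fun q : Fin n × Fin n => q.1 < q.2),
        pgen n q.1 q.2 ∈ Cgrp n := by
  obtain ⟨k, rfl⟩ : ∃ k, n = 6 * k + 5 := by
    obtain ⟨m, rfl⟩ := hodd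
    exact ⟨m / 3, by omega⟩
  have hΦ := smul_phi_add_sum_incidentSum_mem_Cgrp hσ
  have hE := smul_pairSum_add_sum_incidentSum_mem_Cgrp (n := 6 * k + 5)
  have h6Φ := six_smul_phi_mem_Cgrp (by omega) hσ
  have h6E := six_smul_pairSum_mem_Cgrp (n := 6 * k + 5) (by omega)
  have key : phi _ σ + pairSum (6 * k + 5) =
      (((6 * k + 5 : ℕ) : ℤ) - 4) • phi _ σ + 2 • ∑ a, incidentSum _ a
      + ((((6 * k + 5 : ℕ) : ℤ) - 4) • pairSum _ + (6 * k + 5 - 1) • ∑ a, incidentSum _ a)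
      - (k : ℤ) • (6 : ℤ) • phi _ σ - (3 * k + 2 : ℤ) • (6 : ℤ) • pairSum _ := by
    rw [sum_incidentSum, show 6 * k + 5 - 1 = 6 * k + 4 by omega]
    push_cast
    module
  rw [← pairSum, key]
  exact sub_mem (sub_mem (add_mem hΦ hE) (zsmul_mem h6Φ _)) (zsmul_mem h6E _)

/-- For odd `n > 2` with `n ≡ 2 (mod 3)` and any derangement `σ` of `{1,…,n}`,
`φ(σ) · ∏_{1 ≤ i < j ≤ n} p_{i,j} ∈ C_n` (written additively). -/
theorem stmt_15 (n : ℕ) (h2 : 2 < n) (hodd : Odd n) (hmod : n % 3 = 2)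
    (σ : Equiv.Perm (Fin n)) (hσ : ∀ i, σ i ≠ i) :
    phi n σ + ∑ q ∈ Finset.univ.filter (fun q : Fin n × Fin n => q.1 < q.2),
        pgen n q.1 q.2 ∈ Cgrp n :=
  stmt_15_general n hodd hmod σ hσ
end
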